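/- arXiv:2308.08023 — 2 statements merged into one kernel-verified Lean document; each statement's English description precedes it below -/
import Mathlib

section
/- Let R ∈ SO(3) and let M ∈ ℝ^{3×3} be symmetric positive semidefinite. Define M̄ = Tr(M)·I₃ − M and let λ̄ denote the largest eigenvalue of M̄. Then ‖vex(P_a(M R))‖² ≤ 2 λ̄ ‖M R‖_I. -/
/-!
By Rodrigues' formula, `R = c I + s [a]× + (1 - c) a aᵀ` with `‖a‖ = 1` and `c² + s² = 1`.
For symmetric `M` and `n = M̄ a` this gives `‖M R‖_I = (1 - c)/4 ⟨a, n⟩` and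
`vex(P_a(M R)) = (s/2) n - ((1 - c)/2) a × n`, whose squared norm is
`(1 - c)/2 ‖n‖² - (1 - c)²/4 ⟨a, n⟩²`. As `M̄` is positive semidefinite with spectrum in
`[0, λ̄]`, `‖n‖² ≤ λ̄ ⟨a, n⟩`, which yields the bound.
-/

open Matrix

/-- `vex(𝒫ₐ(A))`: the vector associated to the skew-symmetric projection
`𝒫ₐ(A) = ½(A − Aᵀ)`, viewed in Euclidean 3-space. -/
noncomputable def vexPa (A : Matrix (Fin 3) (Fin 3) ℝ) : EuclideanSpace ℝ (Fin 3) :=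
  (WithLp.equiv 2 (Fin 3 → ℝ)).symm
    ![(A 2 1 - A 1 2) / 2, (A 0 2 - A 2 0) / 2, (A 1 0 - A 0 1) / 2]

/-- `‖M R‖_I = ¼ Tr(M (I₃ − R))`. -/
noncomputable def normI (M R : Matrix (Fin 3) (Fin 3) ℝ) : ℝ :=
  (M * (1 - R)).trace / 4

section Spectral

variable {n : Type*} [Fintype n] [DecidableEq n]

open scoped MatrixOrder

lemma Matrix.PosSemidef.trace_smul_one_sub {M : Matrix n n ℝ} (hM : M.PosSemidef) :
    (M.trace • (1 : Matrix n n ℝ) - M).PosSemidef := by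
  have hsa : IsSelfAdjoint M := hM.1
  rw [← nonneg_iff_posSemidef, show M.trace • (1 : Matrix n n ℝ) - M = cfc (M.trace - ·) M by
    rw [cfc_sub _ _ M, cfc_const M.trace M, cfc_id' ℝ M, Algebra.algebraMap_eq_smul_one]]
  refine cfc_nonneg fun t ht => ?_
  obtain ⟨i, rfl⟩ := hM.1.spectrum_real_eq_range_eigenvalues ▸ ht
  rw [hM.1.trace_eq_sum_eigenvalues, sub_nonneg]
  exact Finset.single_le_sum (fun j _ => hM.eigenvalues_nonneg j) (Finset.mem_univ i)

lemma Matrix.PosSemidef.dotProduct_mulVec_self_le {N : Matrix n n ℝ} (hN : N.PosSemidef)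
    {lam : ℝ} (hlam : ∀ i, hN.1.eigenvalues i ≤ lam) (x : n → ℝ) :
    N *ᵥ x ⬝ᵥ N *ᵥ x ≤ lam * (x ⬝ᵥ N *ᵥ x) := by
  have hsa : IsSelfAdjoint N := hN.1
  have hpsd : (lam • N - N * N).PosSemidef := by
    rw [← nonneg_iff_posSemidef, show lam • N - N * N = cfc (fun t => lam * t - t * t) N by
      rw [cfc_sub _ _ N, cfc_const_mul lam _ N, cfc_mul _ _ N, cfc_id' ℝ N]]
    refine cfc_nonneg fun t ht => ?_
    obtain ⟨i, rfl⟩ := hN.1.spectrum_real_eq_range_eigenvalues ▸ ht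
    nlinarith [hN.eigenvalues_nonneg i, hlam i]
  have hsq : x ⬝ᵥ (N * N) *ᵥ x = N *ᵥ x ⬝ᵥ N *ᵥ x := by
    rw [← mulVec_mulVec, dotProduct_mulVec, ← mulVec_transpose,
      (isHermitian_iff_isSymm.mp hN.1).eq]
  have h := hpsd.dotProduct_mulVec_nonneg x
  rw [star_trivial, sub_mulVec, dotProduct_sub, smul_mulVec, dotProduct_smul, hsq,
    smul_eq_mul] at h
  linarith

end Spectral

section OddDimension

variable {n : Type*} [Fintype n] [DecidableEq n] {R : Matrix n n ℝ}

lemma Matrix.det_sub_one_eq_zero_of_odd (hn : Odd (Fintype.card n)) (hR : Rᵀ * R = 1)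
    (hdet : R.det = 1) : (R - 1).det = 0 := by
  have h : (R - 1).det = -(R - 1).det :=
    calc (R - 1).det = (Rᵀ * (R - 1)).det := by rw [det_mul, det_transpose, hdet, one_mul]
      _ = (-(R - 1))ᵀ.det := by
        rw [Matrix.mul_sub, hR, Matrix.mul_one, transpose_neg, transpose_sub, transpose_one,
          neg_sub]
      _ = -(R - 1).det := by rw [det_transpose, det_neg, hn.neg_one_pow, neg_one_mul]
  linarith

lemma Matrix.exists_unit_mulVec_eq_self_of_odd (hn : Odd (Fintype.card n)) (hR : Rᵀ * R = 1)
    (hdet : R.det = 1) : ∃ a : n → ℝ, a ⬝ᵥ a = 1 ∧ R *ᵥ a = a := by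
  obtain ⟨b, hb, hRb⟩ := exists_mulVec_eq_zero_iff.mpr (det_sub_one_eq_zero_of_odd hn hR hdet)
  rw [sub_mulVec, one_mulVec, sub_eq_zero] at hRb
  have hbb : 0 < b ⬝ᵥ b := by simpa using dotProduct_star_self_pos_iff.mpr hb
  refine ⟨(√(b ⬝ᵥ b))⁻¹ • b, ?_, by rw [mulVec_smul, hRb]⟩
  rw [dotProduct_smul, smul_dotProduct, smul_eq_mul, smul_eq_mul, ← mul_assoc, ← sq, inv_pow,
    Real.sq_sqrt hbb.le, inv_mul_cancel₀ hbb.ne']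

end OddDimension

lemma EuclideanSpace.real_norm_sq_eq_dotProduct {ι : Type*} [Fintype ι]
    (x : EuclideanSpace ℝ ι) : ‖x‖ ^ 2 = x.ofLp ⬝ᵥ x.ofLp := by
  rw [← real_inner_self_eq_norm_sq, EuclideanSpace.inner_eq_star_dotProduct, star_trivial]

def crossMatrix (a : Fin 3 → ℝ) : Matrix (Fin 3) (Fin 3) ℝ :=
  !![0, -a 2, a 1; a 2, 0, -a 0; -a 1, a 0, 0]

noncomputable def rodrigues (a : Fin 3 → ℝ) (c s : ℝ) : Matrix (Fin 3) (Fin 3) ℝ :=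
  c • 1 + s • crossMatrix a + (1 - c) • vecMulVec a a

lemma crossMatrix_mulVec (a x : Fin 3 → ℝ) : crossMatrix a *ᵥ x = a ⨯₃ x := by
  ext i
  fin_cases i <;> simp [crossMatrix, cross_apply, mulVec, dotProduct, Fin.sum_univ_three] <;> ring

lemma crossMatrix_vexPa (A : Matrix (Fin 3) (Fin 3) ℝ) :
    crossMatrix (vexPa A).ofLp = (1 / 2 : ℝ) • (A - Aᵀ) := by
  ext i j
  fin_cases i <;> fin_cases j <;> simp [crossMatrix, vexPa] <;> ring

lemma smul_sub_smul_cross_dotProduct_self {a n : Fin 3 → ℝ} {c s : ℝ} (ha : a ⬝ᵥ a = 1)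
    (hcs : c ^ 2 + s ^ 2 = 1) :
    ((s / 2) • n - ((1 - c) / 2) • (a ⨯₃ n)) ⬝ᵥ ((s / 2) • n - ((1 - c) / 2) • (a ⨯₃ n)) =
      (1 - c) / 2 * (n ⬝ᵥ n) - (1 - c) ^ 2 / 4 * (a ⬝ᵥ n) ^ 2 := by
  have hlagrange := cross_dot_cross a n a n
  rw [ha, dotProduct_comm n a] at hlagrange
  simp only [sub_dotProduct, dotProduct_sub, smul_dotProduct, dotProduct_smul, dot_cross_self,
    dotProduct_comm (a ⨯₃ n) n, hlagrange, smul_eq_mul]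
  linear_combination (n ⬝ᵥ n) / 4 * hcs

section Rotation

variable {R : Matrix (Fin 3) (Fin 3) ℝ}

lemma trace_sub_one_sq_add_norm_vexPa_sq (hR : Rᵀ * R = 1) (hdet : R.det = 1) :
    ((R.trace - 1) / 2) ^ 2 + ‖vexPa R‖ ^ 2 = 1 := by
  have hadj : R.adjugate = Rᵀ :=
    calc R.adjugate = R.adjugate * (R * Rᵀ) := by rw [mul_eq_one_comm.mp hR, Matrix.mul_one]
      _ = Rᵀ := by rw [← Matrix.mul_assoc, adjugate_mul, hdet, one_smul, Matrix.one_mul]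
  rw [adjugate_fin_three] at hadj
  have h00 := congrFun₂ hadj 0 0
  have h11 := congrFun₂ hadj 1 1
  have h22 := congrFun₂ hadj 2 2
  have htr := congrArg trace hR
  simp [trace, mul_apply, Fin.sum_univ_three] at h00 h11 h22 htr
  rw [EuclideanSpace.real_norm_sq_eq_dotProduct]
  simp only [vexPa, WithLp.equiv_symm_apply, dotProduct, trace, diag_apply, Fin.sum_univ_three,
    cons_val_zero, cons_val_one, cons_val]
  linear_combination (1 / 2) * (h00 + h11 + h22) + (1 / 4) * htr

lemma norm_vexPa_sq_of_mulVec_eq_self (hR : Rᵀ * R = 1) {a : Fin 3 → ℝ} (ha : a ⬝ᵥ a = 1)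
    (hRa : R *ᵥ a = a) : ‖vexPa R‖ ^ 2 = (a ⬝ᵥ (vexPa R).ofLp) ^ 2 := by
  have hRTa : Rᵀ *ᵥ a = a := by rw [← hRa, mulVec_mulVec, hR, one_mulVec, hRa]
  have hwa : (vexPa R).ofLp ⨯₃ a = 0 := by
    rw [← crossMatrix_mulVec, crossMatrix_vexPa, smul_mulVec, sub_mulVec, hRa, hRTa, sub_self,
      smul_zero]
  have hlagrange := cross_dot_cross (vexPa R).ofLp a (vexPa R).ofLp a
  rw [hwa, zero_dotProduct, ha, dotProduct_comm _ a] at hlagrange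
  rw [EuclideanSpace.real_norm_sq_eq_dotProduct]
  linear_combination -hlagrange

/-- Writing `Q = rodrigues a c s`, one has `‖R - Q‖²_F = 2 - 2 (c² + s²)`. -/
lemma eq_rodrigues (hR : Rᵀ * R = 1) {a : Fin 3 → ℝ} (ha : a ⬝ᵥ a = 1) (hRa : R *ᵥ a = a)
    {c s : ℝ} (hc : c = (R.trace - 1) / 2) (hs : s = a ⬝ᵥ (vexPa R).ofLp)
    (hcs : c ^ 2 + s ^ 2 = 1) : R = rodrigues a c s := by
  rw [← sub_eq_zero, ← trace_conjTranspose_mul_self_eq_zero_iff]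
  have htr := congrArg trace hR
  have hA := congrArg (a ⬝ᵥ ·) hRa
  simp [trace, mul_apply, Fin.sum_univ_three, dotProduct, mulVec] at htr hA ha
  simp only [vexPa, WithLp.equiv_symm_apply, dotProduct, trace, diag_apply, Fin.sum_univ_three,
    cons_val_zero, cons_val_one, cons_val] at hc hs
  simp [trace, mul_apply, Fin.sum_univ_three, rodrigues, crossMatrix, vecMulVec, one_apply]
  linear_combination htr + 4 * c * hc + 4 * s * hs - 2 * (1 - c) * hA - 2 * hcs
    + (2 * s ^ 2 - 2 * (1 - c) + (1 - c) ^ 2 * (a 0 * a 0 + a 1 * a 1 + a 2 * a 2 + 1)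
      + 2 * c * (1 - c)) * ha

lemma exists_rodrigues (hR : Rᵀ * R = 1) (hdet : R.det = 1) :
    ∃ a c s, a ⬝ᵥ a = 1 ∧ c ^ 2 + s ^ 2 = 1 ∧ R = rodrigues a c s := by
  obtain ⟨a, ha, hRa⟩ := exists_unit_mulVec_eq_self_of_odd (by decide) hR hdet
  have hcs : ((R.trace - 1) / 2) ^ 2 + (a ⬝ᵥ (vexPa R).ofLp) ^ 2 = 1 := by
    rw [← norm_vexPa_sq_of_mulVec_eq_self hR ha hRa, trace_sub_one_sq_add_norm_vexPa_sq hR hdet]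
  exact ⟨a, _, _, ha, hcs, eq_rodrigues hR ha hRa rfl rfl hcs⟩

end Rotation

section SymmetricTimesRotation

variable {M : Matrix (Fin 3) (Fin 3) ℝ}

lemma vexPa_mul_rodrigues (hM : M.IsSymm) (a : Fin 3 → ℝ) (c s : ℝ) :
    (vexPa (M * rodrigues a c s)).ofLp =
      (s / 2) • ((M.trace • 1 - M) *ᵥ a) - ((1 - c) / 2) • (a ⨯₃ ((M.trace • 1 - M) *ᵥ a)) := by
  ext i
  fin_cases i <;>
    simp [vexPa, rodrigues, crossMatrix, vecMulVec, mul_apply, Fin.sum_univ_three, cross_apply,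
      mulVec, dotProduct, one_apply, trace, hM.apply 0 1, hM.apply 0 2, hM.apply 1 2] <;> ring

lemma normI_rodrigues (hM : M.IsSymm) {a : Fin 3 → ℝ} (ha : a ⬝ᵥ a = 1) (c s : ℝ) :
    normI M (rodrigues a c s) = (1 - c) / 4 * (a ⬝ᵥ (M.trace • 1 - M) *ᵥ a) := by
  simp only [dotProduct, Fin.sum_univ_three] at ha
  simp [normI, rodrigues, crossMatrix, vecMulVec, mul_apply, Fin.sum_univ_three, mulVec,
    dotProduct, one_apply, trace, hM.apply 0 1, hM.apply 0 2, hM.apply 1 2]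
  linear_combination -(1 - c) / 4 * (M 0 0 + M 1 1 + M 2 2) * ha

end SymmetricTimesRotation

/-- for `R ∈ SO(3)` and `M` symmetric positive semidefinite, with
`M̄ = Tr(M)·I₃ − M` and `λ̄` its largest eigenvalue,
`‖vex(𝒫ₐ(M R))‖² ≤ 2 λ̄ ‖M R‖_I`. -/
theorem vexPa_sq_le (R M : Matrix (Fin 3) (Fin 3) ℝ)
    (hR : Rᵀ * R = 1) (hRdet : R.det = 1)
    (hM : M.PosSemidef)
    (Mbar : Matrix (Fin 3) (Fin 3) ℝ)
    (hMbar : Mbar = M.trace • (1 : Matrix (Fin 3) (Fin 3) ℝ) - M)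
    (hHerm : Mbar.IsHermitian)
    (lam : ℝ) (hlam : lam = ⨆ i, hHerm.eigenvalues i) :
    ‖vexPa (M * R)‖ ^ 2 ≤ 2 * lam * normI M R := by
  obtain ⟨a, c, s, ha, hcs, rfl⟩ := exists_rodrigues hR hRdet
  have hMsymm : M.IsSymm := isHermitian_iff_isSymm.mp hM.1
  have hMbar_psd : Mbar.PosSemidef := hMbar ▸ hM.trace_smul_one_sub
  have hspec : Mbar *ᵥ a ⬝ᵥ Mbar *ᵥ a ≤ lam * (a ⬝ᵥ Mbar *ᵥ a) :=
    hMbar_psd.dotProduct_mulVec_self_le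
      (fun i => hlam ▸ le_ciSup (Set.finite_range _).bddAbove i) a
  have hc : c ≤ 1 := by nlinarith
  rw [EuclideanSpace.real_norm_sq_eq_dotProduct, vexPa_mul_rodrigues hMsymm,
    smul_sub_smul_cross_dotProduct_self ha hcs, normI_rodrigues hMsymm ha, ← hMbar]
  calc (1 - c) / 2 * (Mbar *ᵥ a ⬝ᵥ Mbar *ᵥ a) - (1 - c) ^ 2 / 4 * (a ⬝ᵥ Mbar *ᵥ a) ^ 2
      ≤ (1 - c) / 2 * (Mbar *ᵥ a ⬝ᵥ Mbar *ᵥ a) := sub_le_self _ (by positivity)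
    _ ≤ (1 - c) / 2 * (lam * (a ⬝ᵥ Mbar *ᵥ a)) :=
        mul_le_mul_of_nonneg_left hspec (by linarith)
    _ = 2 * lam * ((1 - c) / 4 * (a ⬝ᵥ Mbar *ᵥ a)) := by ring
end

section
/- Let P ∈ ℝ³, let h₁, …, h_N ∈ ℝ³ (N ≥ 2), and define d_{j,i} = ‖P − h_j‖ − ‖P − h_i‖. Let A ∈ ℝ^{N×4} be the matrix whose k-th row (for 1 ≤ k ≤ N−1) is [(h_k − h_{k+1})ᵀ, −d_{k+1,k}] and whose N-th row is [(h_N − h₁)ᵀ, −d_{1,N}], and let B ∈ ℝ^N be the vector whose first entry is ½(d_{2,1}² + ‖h₁‖² − ‖h₂‖²), whose k-th entry (for 2 ≤ k ≤ N−1) is ½(d_{k+1,k}² + ‖h_k‖² − ‖h_{k+1}‖² + 2 d_{k+1,k} Σ_{i=2}^{k} d_{i,i−1}), and whose N-th entry is ½(d_{1,N}² + ‖h_N‖² − ‖h₁‖² + 2 d_{1,N} Σ_{i=2}^{N} d_{i,i−1}). Then the augmented vector P̄ = [Pᵀ, ‖P − h₁‖]ᵀ ∈ ℝ⁴ satisfies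 A P̄ = B. -/
open Matrix

noncomputable def enorm3 (x : Fin 3 → ℝ) : ℝ :=
  Real.sqrt (∑ i, x i ^ 2)

/-!
With `r j = ‖P - h j‖`, the difference of squares `r m ^ 2 - r k ^ 2` is affine in `P`, since
`‖P‖²` cancels; factoring it as `d_{m,k} (d_{m,k} + 2 r k)` leaves the unknown range `r k`, which
the telescoping sum `∑_{i=2}^{k} d_{i,i-1} = r k - r 1` trades for the fourth unknown `r 1`.
-/

theorem Finset.sum_Icc_two_sub_pred {M : Type*} [AddCommGroup M] (f : ℕ → M) (n : ℕ) :
    ∑ i ∈ Finset.Icc 2 (n + 1), (f i - f (i - 1)) = f (n + 1) - f 1 := by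
  induction n with
  | zero => simp
  | succ n ih =>
    rw [Finset.sum_Icc_succ_top (by omega), ih, Nat.add_sub_cancel]
    abel

section InnerProductSpace

variable {E : Type*} [NormedAddCommGroup E] [InnerProductSpace ℝ E]

theorem two_mul_inner_sub_eq (P a b : E) :
    2 * inner ℝ (a - b) P = ‖P - b‖ ^ 2 - ‖P - a‖ ^ 2 + ‖a‖ ^ 2 - ‖b‖ ^ 2 := by
  rw [norm_sub_sq_real P a, norm_sub_sq_real P b, inner_sub_left, real_inner_comm P a,
    real_inner_comm P b]
  ring

theorem inner_sub_sub_norm_sub_mul_eq (P a b : E) (r₁ : ℝ) :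
    inner ℝ (a - b) P - (‖P - b‖ - ‖P - a‖) * r₁ =
      ((‖P - b‖ - ‖P - a‖) ^ 2 + ‖a‖ ^ 2 - ‖b‖ ^ 2 +
        2 * (‖P - b‖ - ‖P - a‖) * (‖P - a‖ - r₁)) / 2 := by
  linear_combination (two_mul_inner_sub_eq P a b) / 2

end InnerProductSpace

theorem enorm3_eq_norm_toLp (x : Fin 3 → ℝ) :
    enorm3 x = ‖(WithLp.toLp 2 x : EuclideanSpace ℝ (Fin 3))‖ := by
  simp [enorm3, EuclideanSpace.norm_eq]

theorem sum_sub_mul_sub_enorm3_sub_mul_eq (P a b : Fin 3 → ℝ) (r₁ : ℝ) :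
    ∑ i, (a i - b i) * P i - (enorm3 (P - b) - enorm3 (P - a)) * r₁ =
      ((enorm3 (P - b) - enorm3 (P - a)) ^ 2 + enorm3 a ^ 2 - enorm3 b ^ 2 +
        2 * (enorm3 (P - b) - enorm3 (P - a)) * (enorm3 (P - a) - r₁)) / 2 := by
  simpa [enorm3_eq_norm_toLp, PiLp.inner_apply, mul_comm] using
    inner_sub_sub_norm_sub_mul_eq (WithLp.toLp 2 P) (WithLp.toLp 2 a) (WithLp.toLp 2 b) r₁

theorem tdoa_matrix_identity_general (N : ℕ)
    (P : Fin 3 → ℝ) (h : ℕ → Fin 3 → ℝ)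
    (d : ℕ → ℕ → ℝ) (hd : ∀ j i, d j i = enorm3 (P - h j) - enorm3 (P - h i))
    (A : Matrix (Fin N) (Fin 4) ℝ)
    (hA : ∀ (k : Fin N) (j : Fin 4),
      A k j =
        if hj : (j : ℕ) < 3 then
          h ((k : ℕ) + 1) ⟨j, hj⟩ -
            h (if (k : ℕ) + 1 = N then 1 else (k : ℕ) + 2) ⟨j, hj⟩
        else
          -d (if (k : ℕ) + 1 = N then 1 else (k : ℕ) + 2) ((k : ℕ) + 1))
    (B : Fin N → ℝ)
    (hB : ∀ k : Fin N,
      B k =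
        (d (if (k : ℕ) + 1 = N then 1 else (k : ℕ) + 2) ((k : ℕ) + 1) ^ 2 +
            enorm3 (h ((k : ℕ) + 1)) ^ 2 -
            enorm3 (h (if (k : ℕ) + 1 = N then 1 else (k : ℕ) + 2)) ^ 2 +
            2 * d (if (k : ℕ) + 1 = N then 1 else (k : ℕ) + 2) ((k : ℕ) + 1) *
              ∑ i ∈ Finset.Icc 2 ((k : ℕ) + 1), d i (i - 1)) / 2) :
    A.mulVec ![P 0, P 1, P 2, enorm3 (P - h 1)] = B := by
  funext k
  set m := if (k : ℕ) + 1 = N then 1 else (k : ℕ) + 2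
  have hrow : A.mulVec ![P 0, P 1, P 2, enorm3 (P - h 1)] k =
      ∑ i, (h (k + 1) i - h m i) * P i - d m (k + 1) * enorm3 (P - h 1) := by
    simp [mulVec, dotProduct, Fin.sum_univ_four, Fin.sum_univ_three, hA, m, sub_eq_add_neg]
  have htel : ∑ i ∈ Finset.Icc 2 ((k : ℕ) + 1), d i (i - 1) =
      enorm3 (P - h (k + 1)) - enorm3 (P - h 1) := by
    simp only [hd]
    exact Finset.sum_Icc_two_sub_pred (fun j ↦ enorm3 (P - h j)) k
  rw [hrow, hB k, htel, hd]
  exact sum_sub_mul_sub_enorm3_sub_mul_eq P (h (k + 1)) (h m) _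

/-- the TDOA data matrix `A` and vector `B` (rows indexed by
`k : Fin N`, corresponding to the paper's rows `1, …, N`, the `k`-th row pairing
anchor `k+1` with anchor `k+2`, and the last row pairing anchor `N` with anchor `1`)
satisfy `A P̄ = B` for the augmented position `P̄ = [Pᵀ, ‖P − h 1‖]ᵀ`. -/
theorem tdoa_matrix_identity (N : ℕ) (hN : 2 ≤ N)
    (P : Fin 3 → ℝ) (h : ℕ → Fin 3 → ℝ)
    (d : ℕ → ℕ → ℝ) (hd : ∀ j i, d j i = enorm3 (P - h j) - enorm3 (P - h i))
    (A : Matrix (Fin N) (Fin 4) ℝ)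
    (hA : ∀ (k : Fin N) (j : Fin 4),
      A k j =
        if hj : (j : ℕ) < 3 then
          h ((k : ℕ) + 1) ⟨j, hj⟩ -
            h (if (k : ℕ) + 1 = N then 1 else (k : ℕ) + 2) ⟨j, hj⟩
        else
          -d (if (k : ℕ) + 1 = N then 1 else (k : ℕ) + 2) ((k : ℕ) + 1))
    (B : Fin N → ℝ)
    (hB : ∀ k : Fin N,
      B k =
        (d (if (k : ℕ) + 1 = N then 1 else (k : ℕ) + 2) ((k : ℕ) + 1) ^ 2 +
            enorm3 (h ((k : ℕ) + 1)) ^ 2 -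
            enorm3 (h (if (k : ℕ) + 1 = N then 1 else (k : ℕ) + 2)) ^ 2 +
            2 * d (if (k : ℕ) + 1 = N then 1 else (k : ℕ) + 2) ((k : ℕ) + 1) *
              ∑ i ∈ Finset.Icc 2 ((k : ℕ) + 1), d i (i - 1)) / 2) :
    A.mulVec ![P 0, P 1, P 2, enorm3 (P - h 1)] = B :=
  tdoa_matrix_identity_general N P h d hd A hA B hB
end
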